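/- Let M be a loopless matroid of odd rank r on a finite ground set. Then M is non-degenerate (i.e., deg P_M(t) = ⌊(r−1)/2⌋) if and only if the inverse Kazhdan–Lusztig polynomial Q_M(t) has degree ⌊(r−1)/2⌋. -/

import Mathlib

/-! Self-contained definitions: matroid minors, rank, flats, the Möbius function of the
lattice of flats, the characteristic polynomial, the defining axioms of the
(inverse) Kazhdan–Lusztig polynomials of a matroid, and basic structural notions
(circuits, connectivity, simplicity, representability, modularity). -/

open Polynomial Matroid

namespace KL

variable {α : Type} [Fintype α]

/-- The deletion of a set `D` from the matroid `M`. -/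
def del (M : Matroid α) (D : Set α) : Matroid α := M ↾ (M.E \ D)

/-- The contraction of the matroid `M` by the set `C`, defined by duality. -/
def con (M : Matroid α) (C : Set α) : Matroid α := (del M✶ C)✶

/-- The rank of a matroid on a finite ground set: the maximal size of an independent set. -/
noncomputable def rk (M : Matroid α) : ℕ := sSup {n | ∃ I, M.Indep I ∧ I.ncard = n}

/-- The rank of a set `X` in a matroid `M`. -/
noncomputable def rkSet (M : Matroid α) (X : Set α) : ℕ := rk (M ↾ X)

/-- A matroid is loopless if every singleton of its ground set is independent. -/
def Loopless (M : Matroid α) : Prop := ∀ e ∈ M.E, M.Indep {e}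

/-- A circuit of a matroid is a minimal dependent set. -/
def Circuit (M : Matroid α) (C : Set α) : Prop :=
  M.Dep C ∧ ∀ D, M.Dep D → D ⊆ C → D = C

/-- A matroid is connected if its ground set is nonempty and every two distinct
elements of the ground set lie in a common circuit. -/
def Connected (M : Matroid α) : Prop :=
  M.E.Nonempty ∧ ∀ e f, e ∈ M.E → f ∈ M.E → e ≠ f → ∃ C, Circuit M C ∧ e ∈ C ∧ f ∈ C

/-- A matroid is simple if it has no loops and no pair of parallel elements; equivalently,
every subset of the ground set with at most two elements is independent. -/
def Simple (M : Matroid α) : Prop :=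
  ∀ I : Set α, I ⊆ M.E → I.ncard ≤ 2 → M.Indep I

/-- A matroid is representable over a field `𝔽` if there is an assignment of vectors to the
elements of the ground set such that independence coincides with linear independence. -/
def Representable (M : Matroid α) (𝔽 : Type) [Field 𝔽] : Prop :=
  ∃ (n : ℕ) (φ : α → (Fin n → 𝔽)), ∀ I : Set α,
    M.Indep I ↔ (I ⊆ M.E ∧ LinearIndependent 𝔽 (fun x : I => φ x))

/-- A matroid is regular if it is representable over every field. -/
def Regular (M : Matroid α) : Prop := ∀ (𝔽 : Type) (_ : Field 𝔽), Representable M 𝔽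

/-- The lattice of flats of `M` is modular: `rk F + rk G = rk (F ∨ G) + rk (F ∧ G)` for all
flats `F, G`, where the join of two flats is the closure of their union and their meet is
their intersection. -/
def ModularFlats (M : Matroid α) : Prop :=
  ∀ F G : Set α, M.IsFlat F → M.IsFlat G →
    rkSet M F + rkSet M G = rkSet M (M.closure (F ∪ G)) + rkSet M (F ∩ G)

open Classical in
/-- The finset of flats of a matroid on a finite ground set. -/
noncomputable def flats (M : Matroid α) : Finset (Set α) :=
  Finset.univ.filter fun F => M.IsFlat F

open Classical in
/-- The Möbius function of the lattice of flats of `M`, as a function on pairs of sets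
(zero when either set is not a flat, and zero on non-ordered pairs of flats). -/
noncomputable def mob (M : Matroid α) (F G : Set α) : ℤ :=
  letI : LocallyFiniteOrder {X : Set α // M.IsFlat X} := Fintype.toLocallyFiniteOrder
  if hF : M.IsFlat F then
    if hG : M.IsFlat G then
      IncidenceAlgebra.mu ℤ (⟨F, hF⟩ : {X : Set α // M.IsFlat X}) ⟨G, hG⟩
    else 0
  else 0

open Classical in
/-- The doubly-indexed Whitney numbers of the first kind:
`w_{i,j} = Σ μ(F,G)` over pairs of flats `F ⊆ G` with `rk F = i` and `rk G = j`. -/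
noncomputable def whitney (M : Matroid α) (i j : ℕ) : ℤ :=
  ∑ F ∈ flats M, ∑ G ∈ flats M,
    if rkSet M F = i ∧ rkSet M G = j ∧ F ⊆ G then mob M F G else 0

/-- The characteristic polynomial `χ_M(t) = Σ_{F ∈ L(M)} μ(∅,F) t^(r - rk F)`
of a (loopless) matroid. -/
noncomputable def chi (M : Matroid α) : Polynomial ℤ :=
  ∑ F ∈ flats M, C (mob M ∅ F) * X ^ (rk M - rkSet M F)

/-- The defining axioms of the Kazhdan–Lusztig polynomial assignment `M ↦ P_M(t)`:
`P_M = 1` in rank `0`; `deg P_M < r/2` for `r > 0`; and the defining recursion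
`t^r P_M(t⁻¹) = Σ_{F ∈ L(M)} χ_{M_F}(t) P_{M^F}(t)`, where `t^r P_M(t⁻¹)` is
formalized as `reflect r P_M`. -/
def IsKLPolynomial (P : Matroid α → Polynomial ℤ) : Prop :=
  (∀ N : Matroid α, Loopless N → rk N = 0 → P N = 1) ∧
  (∀ N : Matroid α, Loopless N → 0 < rk N → 2 * (P N).natDegree < rk N) ∧
  (∀ N : Matroid α, Loopless N →
    (P N).reflect (rk N) = ∑ F ∈ flats N, chi (N ↾ F) * P (con N F))

/-- The defining axioms of the inverse Kazhdan–Lusztig polynomial assignment `M ↦ Q_M(t)`: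
`Q_M = 1` in rank `0`; `deg Q_M < r/2` for `r > 0`; and the defining recursion
`(-1)^r t^r Q_M(t⁻¹) = Σ_{F ∈ L(M)} (-1)^(rk F) Q_{M_F}(t) · t^(r - rk F) χ_{M^F}(t⁻¹)`,
where `t^k p(t⁻¹)` is formalized as `reflect k p`. -/
def IsInvKLPolynomial (Q : Matroid α → Polynomial ℤ) : Prop :=
  (∀ N : Matroid α, Loopless N → rk N = 0 → Q N = 1) ∧
  (∀ N : Matroid α, Loopless N → 0 < rk N → 2 * (Q N).natDegree < rk N) ∧
  (∀ N : Matroid α, Loopless N →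
    (-1 : Polynomial ℤ) ^ (rk N) * (Q N).reflect (rk N) =
      ∑ F ∈ flats N, (-1 : Polynomial ℤ) ^ (rkSet N F) * Q (N ↾ F) *
        (chi (con N F)).reflect (rk N - rkSet N F))

end KL

/-! Write `q_F = (-1)^{rk F} Q_{M_F}`, `p_F = P_{M^F}` and `A = Σ_F q_F p_F`. Expanding every
`q_F` by the inverse Kazhdan–Lusztig recursion (turned around by `t ↦ t^{rk F} (·)(t⁻¹)`),
exchanging the two sums and collapsing the inner one with the Kazhdan–Lusztig recursion of
`M^G` shows that `A` is palindromic: `t^r A(t⁻¹) = A(t)`. For `r = 2d + 1` the degree bounds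
give `deg A ≤ d`, so `[t^d] A = [t^{d+1}] A = 0`. Every term with `F ≠ ∅, E` has degree `< d`,
and the two remaining terms are `P_M` and `-Q_M`; hence `[t^d] P_M = [t^d] Q_M`. -/

namespace Polynomial

variable {R : Type*}

lemma reflect_sum [Semiring R] {ι : Type*} (s : Finset ι) (f : ι → R[X]) (N : ℕ) :
    (∑ i ∈ s, f i).reflect N = ∑ i ∈ s, (f i).reflect N :=
  map_sum (⟨⟨reflect N, reflect_zero⟩, fun p q => reflect_add p q N⟩ : R[X] →+ R[X]) f s

lemma reflect_neg_one_pow_mul [Ring R] (k N : ℕ) (p : R[X]) :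
    ((-1) ^ k * p).reflect N = (-1) ^ k * p.reflect N := by
  rcases neg_one_pow_eq_or R[X] k with h | h <;> simp [h, reflect_neg]

lemma natDegree_neg_one_pow_mul [Ring R] (k : ℕ) (p : R[X]) :
    ((-1) ^ k * p).natDegree = p.natDegree := by
  rcases neg_one_pow_eq_or R[X] k with h | h <;> simp [h]

lemma natDegree_neg_one_pow_mul_mul_le [Ring R] (k : ℕ) (p q : R[X]) :
    ((-1) ^ k * p * q).natDegree ≤ p.natDegree + q.natDegree :=
  natDegree_mul_le.trans_eq (by rw [natDegree_neg_one_pow_mul])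

lemma coeff_eq_zero_of_reflect_eq_self [Semiring R] {p : R[X]} {d : ℕ}
    (hp : p.reflect (2 * d + 1) = p) (hdeg : p.natDegree ≤ d) : p.coeff d = 0 := by
  rw [← hp, coeff_reflect, revAt_le (by omega)]
  exact coeff_eq_zero_of_natDegree_lt (by omega)

lemma natDegree_eq_iff_coeff_ne_zero_of_le [Semiring R] {p : R[X]} {n : ℕ}
    (hp : p.natDegree ≤ n) (hn : 0 < n) : p.natDegree = n ↔ p.coeff n ≠ 0 := by
  refine ⟨fun h => ?_, natDegree_eq_of_le_of_coeff_ne_zero hp⟩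
  have hp0 : p ≠ 0 := by
    rintro rfl
    rw [natDegree_zero] at h
    omega
  rw [← h]
  exact leadingCoeff_ne_zero.2 hp0

end Polynomial

namespace Matroid

variable {α : Type*} {M : Matroid α} {C F R : Set α}

lemma isFlat_restrict_iff (hR : M.IsFlat R) : (M ↾ R).IsFlat F ↔ M.IsFlat F ∧ F ⊆ R := by
  rw [isFlat_iff_closure_eq, isFlat_iff_closure_eq]
  refine ⟨fun h => ?_, fun ⟨hF, hFR⟩ => ?_⟩
  · have hFR : F ⊆ R := h ▸ (M ↾ R).closure_subset_ground F
    rw [restrict_closure_eq M hFR hR.subset_ground, Set.inter_eq_self_of_subset_left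
      ((M.closure_subset_closure hFR).trans_eq hR.closure)] at h
    exact ⟨h, hFR⟩
  · rw [restrict_closure_eq M hFR hR.subset_ground, hF, Set.inter_eq_self_of_subset_left hFR]

lemma isFlat_contract_iff (hC : C ⊆ M.E) :
    (M ／ C).IsFlat F ↔ M.IsFlat (F ∪ C) ∧ Disjoint F C := by
  rw [isFlat_iff_closure_eq, isFlat_iff_closure_eq, contract_closure_eq]
  refine ⟨fun h => ⟨?_, h ▸ Set.disjoint_sdiff_left⟩, fun ⟨h, hFC⟩ => ?_⟩
  · rw [← Set.sdiff_union_of_subset (M.subset_closure_of_subset' Set.subset_union_right hC), h]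
  · rw [h, Set.union_sdiff_right, hFC.sdiff_eq_left]

end Matroid

namespace KL

variable {α : Type} {M N : Matroid α} {B C F G : Set α} {P Q : Matroid α → ℤ[X]}

lemma con_eq_contract (M : Matroid α) (C : Set α) : con M C = M ／ C := rfl

lemma rk_eq_ncard [Finite α] (hB : M.IsBase B) : rk M = B.ncard := by
  refine IsGreatest.csSup_eq ⟨⟨B, hB.indep, rfl⟩, ?_⟩
  rintro n ⟨I, hI, rfl⟩
  obtain ⟨B', hB', hIB'⟩ := hI.exists_isBase_superset
  calc I.ncard ≤ B'.ncard := Set.ncard_le_ncard hIB' B'.toFinite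
    _ = B.ncard := by rw [Set.ncard, Set.ncard, hB'.encard_eq_encard_of_isBase hB]

lemma rk_restrict (M : Matroid α) (F : Set α) : rk (M ↾ F) = rkSet M F := rfl

lemma rkSet_ground (M : Matroid α) : rkSet M M.E = rk M := by
  rw [rkSet, restrict_ground_eq_self]

lemma rkSet_restrict (hGF : G ⊆ F) : rkSet (M ↾ F) G = rkSet M G := by
  rw [rkSet, rkSet, restrict_restrict_eq M hGF]

lemma rkSet_add_rk_contract [Finite α] (hC : C ⊆ M.E) : rkSet M C + rk (M ／ C) = rk M := by
  obtain ⟨I, hI⟩ := M.exists_isBasis C hC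
  obtain ⟨B, hB, hIB⟩ := hI.indep.exists_isBase_superset
  have hBC : B ∩ C = I := (hI.eq_of_subset_indep (hB.indep.subset Set.inter_subset_left)
    (Set.subset_inter hIB hI.subset) Set.inter_subset_right).symm
  have hcontract : (M ／ C).IsBase (B \ C) := by
    rw [← isBasis_ground_iff, contract_ground]
    exact (isBasis_ground_iff.2 hB).contract_isBasis hI
      (hB.indep.subset (Set.union_subset Set.sdiff_subset hIB))
  rw [rkSet, rk_eq_ncard hI.isBase_restrict, rk_eq_ncard hcontract, rk_eq_ncard hB, ← hBC,
    Set.ncard_inter_add_ncard_sdiff_eq_ncard B C B.toFinite]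

lemma Loopless.restrict (hM : Loopless M) (hF : F ⊆ M.E) : Loopless (M ↾ F) := fun e he =>
  restrict_indep_iff.2 ⟨hM e (hF he), Set.singleton_subset_iff.2 he⟩

lemma loopless_contract (hF : M.IsFlat F) : Loopless (M ／ F) := fun e he => by
  rwa [indep_singleton, contract_isNonloop_iff, hF.closure]

lemma Loopless.isFlat_empty (hM : Loopless M) : M.IsFlat ∅ := by
  refine isFlat_iff_closure_eq.2 (Set.eq_empty_of_forall_notMem fun e he => ?_)
  exact (indep_singleton.1 (hM e (M.closure_subset_ground ∅ he))).not_isLoop he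

lemma Loopless.rk_pos [Finite α] (hN : Loopless N) (hE : N.E.Nonempty) : 0 < rk N := by
  obtain ⟨e, he⟩ := hE
  obtain ⟨B, hB, heB⟩ := (hN e he).exists_isBase_superset
  rw [rk_eq_ncard hB]
  exact (Set.ncard_pos B.toFinite).2 ⟨e, heB rfl⟩

lemma two_mul_natDegree_le_rk {R : Matroid α → ℤ[X]}
    (h0 : ∀ N : Matroid α, Loopless N → rk N = 0 → R N = 1)
    (hlt : ∀ N : Matroid α, Loopless N → 0 < rk N → 2 * (R N).natDegree < rk N)
    (hN : Loopless N) : 2 * (R N).natDegree ≤ rk N := by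
  rcases Nat.eq_zero_or_pos (rk N) with h | h
  · rw [h0 N hN h, natDegree_one]
    omega
  · exact (hlt N hN h).le

section Finite

variable [Fintype α]

open Classical

lemma mem_flats : F ∈ flats M ↔ M.IsFlat F := by
  simp [flats]

lemma flats_restrict (hF : M.IsFlat F) : flats (M ↾ F) = {G ∈ flats M | G ⊆ F} := by
  ext G
  simp only [mem_flats, Finset.mem_filter, isFlat_restrict_iff hF]

lemma flats_contract (hC : C ⊆ M.E) :
    flats (M ／ C) = {F ∈ flats M | C ⊆ F}.image (· \ C) := by
  ext K
  simp only [mem_flats, Finset.mem_image, Finset.mem_filter, isFlat_contract_iff hC]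
  refine ⟨fun ⟨hK, hKC⟩ => ⟨K ∪ C, ⟨hK, Set.subset_union_right⟩, ?_⟩, ?_⟩
  · rw [Set.union_sdiff_right, hKC.sdiff_eq_left]
  · rintro ⟨F, ⟨hF, hCF⟩, rfl⟩
    rw [Set.sdiff_union_of_subset hCF]
    exact ⟨hF, Set.disjoint_sdiff_left⟩

lemma natDegree_chi_le (N : Matroid α) : (chi N).natDegree ≤ rk N := by
  refine natDegree_sum_le_of_forall_le _ _ fun F _ => (natDegree_C_mul_le _ _).trans ?_
  rw [natDegree_X_pow]
  exact Nat.sub_le _ _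

lemma IsInvKLPolynomial.neg_one_pow_mul_eq_sum (hQ : IsInvKLPolynomial Q) (hM : Loopless M)
    (hF : M.IsFlat F) :
    (-1) ^ rkSet M F * Q (M ↾ F) = ∑ G ∈ flats M with G ⊆ F,
      ((-1) ^ rkSet M G * Q (M ↾ G)).reflect (rkSet M G) * chi ((M ↾ F) ／ G) := by
  have hrec := congrArg (reflect (rkSet M F)) (hQ.2.2 (M ↾ F) (hM.restrict hF.subset_ground))
  rw [rk_restrict, reflect_neg_one_pow_mul, reflect_reflect,
    flats_restrict hF, reflect_sum] at hrec
  rw [hrec]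
  refine Finset.sum_congr rfl fun G hG => ?_
  have hGF : G ⊆ F := (Finset.mem_filter.1 hG).2
  have hrk : rkSet M G + rk ((M ↾ F) ／ G) = rkSet M F := by
    rw [← rkSet_restrict hGF]
    exact rkSet_add_rk_contract (M := M ↾ F) hGF
  have hQG : ((-1) ^ rkSet M G * Q (M ↾ G)).natDegree ≤ rkSet M G := by
    have := two_mul_natDegree_le_rk hQ.1 hQ.2.1 (hM.restrict (hGF.trans hF.subset_ground))
    rw [natDegree_neg_one_pow_mul, ← rk_restrict]
    omega
  have hchi : ((chi ((M ↾ F) ／ G)).reflect (rk ((M ↾ F) ／ G))).natDegree ≤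
      rk ((M ↾ F) ／ G) := natDegree_reflect_le.trans (max_le le_rfl (natDegree_chi_le _))
  rw [rkSet_restrict hGF, restrict_restrict_eq M hGF, con_eq_contract, ← hrk,
    Nat.add_sub_cancel_left, reflect_mul _ _ hQG hchi, reflect_reflect]

lemma IsKLPolynomial.reflect_contract_eq_sum (hP : IsKLPolynomial P) (hG : M.IsFlat G) :
    (P (M ／ G)).reflect (rk (M ／ G)) =
      ∑ F ∈ flats M with G ⊆ F, chi ((M ↾ F) ／ G) * P (M ／ F) := by
  have hinj : Set.InjOn (· \ G) ({F ∈ flats M | G ⊆ F} : Finset (Set α)) := by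
    intro F hF F' hF' h
    simp only [Finset.coe_filter, Set.mem_ofPred_eq] at hF hF'
    rw [← Set.sdiff_union_of_subset hF.2, ← Set.sdiff_union_of_subset hF'.2]
    exact congrArg (· ∪ G) h
  rw [hP.2.2 (M ／ G) (loopless_contract hG), flats_contract hG.subset_ground,
    Finset.sum_image hinj]
  refine Finset.sum_congr rfl fun F hF => ?_
  have hGF : G ⊆ F := (Finset.mem_filter.1 hF).2
  rw [← restrict_contract_eq_contract_restrict M hGF, con_eq_contract, contract_contract,
    Set.union_sdiff_cancel hGF]

noncomputable def convolution (P Q : Matroid α → ℤ[X]) (M : Matroid α) : ℤ[X] :=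
  ∑ F ∈ flats M, (-1) ^ rkSet M F * Q (M ↾ F) * P (M ／ F)

lemma reflect_convolution (hP : IsKLPolynomial P) (hQ : IsInvKLPolynomial Q) (hM : Loopless M) :
    (convolution P Q M).reflect (rk M) = convolution P Q M := by
  have hterm : ∀ G ∈ flats M, ((-1) ^ rkSet M G * Q (M ↾ G) * P (M ／ G)).reflect (rk M) =
      ((-1) ^ rkSet M G * Q (M ↾ G)).reflect (rkSet M G) * (P (M ／ G)).reflect (rk (M ／ G)) := by
    intro G hG
    have hGE := (mem_flats.1 hG).subset_ground
    have hQG := two_mul_natDegree_le_rk hQ.1 hQ.2.1 (hM.restrict hGE)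
    have hPG := two_mul_natDegree_le_rk hP.1 hP.2.1 (loopless_contract (mem_flats.1 hG))
    rw [← rkSet_add_rk_contract hGE]
    refine reflect_mul _ _ ?_ (by omega)
    rw [natDegree_neg_one_pow_mul, ← rk_restrict]
    omega
  calc (convolution P Q M).reflect (rk M)
      = ∑ G ∈ flats M, ((-1) ^ rkSet M G * Q (M ↾ G)).reflect (rkSet M G) *
          ∑ F ∈ flats M with G ⊆ F, chi ((M ↾ F) ／ G) * P (M ／ F) := by
        rw [convolution, reflect_sum]
        refine Finset.sum_congr rfl fun G hG => ?_
        rw [hterm G hG, hP.reflect_contract_eq_sum (mem_flats.1 hG)]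
    _ = ∑ F ∈ flats M, ∑ G ∈ flats M with G ⊆ F,
          ((-1) ^ rkSet M G * Q (M ↾ G)).reflect (rkSet M G) * chi ((M ↾ F) ／ G) *
            P (M ／ F) := by
        simp only [Finset.mul_sum, mul_assoc]
        exact Finset.sum_comm' fun G F => by simp only [Finset.mem_filter]; tauto
    _ = convolution P Q M := by
        refine Finset.sum_congr rfl fun F hF => ?_
        rw [← Finset.sum_mul, ← hQ.neg_one_pow_mul_eq_sum hM (mem_flats.1 hF)]

lemma two_mul_natDegree_convolution_term_le (hP : IsKLPolynomial P) (hQ : IsInvKLPolynomial Q)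
    (hM : Loopless M) (hF : M.IsFlat F) :
    2 * ((-1) ^ rkSet M F * Q (M ↾ F) * P (M ／ F)).natDegree ≤ rk M := by
  have hdeg := natDegree_neg_one_pow_mul_mul_le (rkSet M F) (Q (M ↾ F)) (P (M ／ F))
  have hQF := two_mul_natDegree_le_rk hQ.1 hQ.2.1 (hM.restrict hF.subset_ground)
  have hPF := two_mul_natDegree_le_rk hP.1 hP.2.1 (loopless_contract hF)
  have hrk := rkSet_add_rk_contract hF.subset_ground
  rw [rk_restrict] at hQF
  omega

lemma two_mul_natDegree_convolution_term_add_two_le (hP : IsKLPolynomial P)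
    (hQ : IsInvKLPolynomial Q) (hM : Loopless M) (hF : M.IsFlat F) (hF₀ : F.Nonempty)
    (hFE : F ≠ M.E) :
    2 * ((-1) ^ rkSet M F * Q (M ↾ F) * P (M ／ F)).natDegree + 2 ≤ rk M := by
  have hdeg := natDegree_neg_one_pow_mul_mul_le (rkSet M F) (Q (M ↾ F)) (P (M ／ F))
  have hMF := hM.restrict hF.subset_ground
  have hQF := hQ.2.1 _ hMF (hMF.rk_pos hF₀)
  have hPF := hP.2.1 _ (loopless_contract hF) ((loopless_contract hF).rk_pos
    (Set.nonempty_of_ssubset (hF.subset_ground.ssubset_of_ne hFE)))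
  have hrk := rkSet_add_rk_contract hF.subset_ground
  rw [rk_restrict] at hQF
  omega

lemma two_mul_natDegree_convolution_le (hP : IsKLPolynomial P) (hQ : IsInvKLPolynomial Q)
    (hM : Loopless M) : 2 * (convolution P Q M).natDegree ≤ rk M := by
  have h := natDegree_sum_le_of_forall_le (flats M)
    (fun F => (-1) ^ rkSet M F * Q (M ↾ F) * P (M ／ F)) (n := rk M / 2) fun F hF => by
      have := two_mul_natDegree_convolution_term_le hP hQ hM (mem_flats.1 hF)
      omega
  rw [convolution]
  omega

theorem coeff_KL_eq_coeff_invKL (hP : IsKLPolynomial P) (hQ : IsInvKLPolynomial Q)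
    (hM : Loopless M) {d : ℕ} (hr : rk M = 2 * d + 1) : (P M).coeff d = (Q M).coeff d := by
  have hrk₀ : rkSet M ∅ = 0 := by
    simpa using rkSet_add_rk_contract (M := M) (Set.empty_subset _)
  have hrkE : rk (M ／ M.E) = 0 := by
    simpa [rkSet_ground] using rkSet_add_rk_contract (M := M) subset_rfl
  have hE₀ : (∅ : Set α) ≠ M.E := fun h => by
    rw [h, rkSet_ground] at hrk₀
    omega
  have hterm₀ : (-1) ^ rkSet M ∅ * Q (M ↾ ∅) * P (M ／ ∅) = P M := by
    rw [hQ.1 _ (hM.restrict (Set.empty_subset _)) hrk₀, hrk₀, contract_empty]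
    ring
  have htermE : (-1) ^ rkSet M M.E * Q (M ↾ M.E) * P (M ／ M.E) = -Q M := by
    rw [hP.1 _ (loopless_contract M.ground_isFlat) hrkE, rkSet_ground, restrict_ground_eq_self,
      hr, pow_succ, pow_mul]
    ring
  have hmid : ∀ F ∈ flats M, F ≠ ∅ ∧ F ≠ M.E →
      ((-1) ^ rkSet M F * Q (M ↾ F) * P (M ／ F)).coeff d = 0 := fun F hF ⟨hF₀, hFE⟩ => by
    have := two_mul_natDegree_convolution_term_add_two_le hP hQ hM (mem_flats.1 hF)
      (Set.nonempty_iff_ne_empty.2 hF₀) hFE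
    exact coeff_eq_zero_of_natDegree_lt (by omega)
  have hA := coeff_eq_zero_of_reflect_eq_self (hr ▸ reflect_convolution hP hQ hM)
    (by have := two_mul_natDegree_convolution_le hP hQ hM; omega)
  rw [convolution, finsetSum_coeff, Finset.sum_eq_add_of_mem ∅ M.E
    (mem_flats.2 hM.isFlat_empty) (mem_flats.2 M.ground_isFlat) hE₀ hmid, hterm₀, htermE,
    coeff_neg] at hA
  linarith

end Finite

/-- Let `M` be a loopless matroid of odd rank `r` on a finite ground set. Then
`M` is non-degenerate (i.e., `deg P_M(t) = ⌊(r-1)/2⌋`) if and only if the inverse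
Kazhdan–Lusztig polynomial `Q_M(t)` has degree `⌊(r-1)/2⌋`. -/
theorem nondegenerate_iff_invKL_degree {α : Type} [Fintype α]
    (P Q : Matroid α → Polynomial ℤ) (hP : IsKLPolynomial P) (hQ : IsInvKLPolynomial Q)
    (M : Matroid α) (hM : Loopless M) (hodd : Odd (rk M)) :
    (P M).natDegree = (rk M - 1) / 2 ↔ (Q M).natDegree = (rk M - 1) / 2 := by
  obtain ⟨d, hd⟩ := hodd
  have hPd : (P M).natDegree ≤ d := by
    have := two_mul_natDegree_le_rk hP.1 hP.2.1 hM
    omega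
  have hQd : (Q M).natDegree ≤ d := by
    have := two_mul_natDegree_le_rk hQ.1 hQ.2.1 hM
    omega
  rw [show (rk M - 1) / 2 = d by omega]
  rcases Nat.eq_zero_or_pos d with rfl | hd₀
  · omega
  rw [natDegree_eq_iff_coeff_ne_zero_of_le hPd hd₀, natDegree_eq_iff_coeff_ne_zero_of_le hQd hd₀,
    coeff_KL_eq_coeff_invKL hP hQ hM hd]

end KL
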